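/- arXiv:2301.09880 — 2 statements merged into one kernel-verified Lean document; each statement's English description precedes it below -/
import Mathlib

section
/- Let C be a nonempty closed convex subset of a finite-dimensional real inner product space E, and let Φ : E → ℝ be differentiable with L-Lipschitz gradient. Fix η > 0, an initial point s¹ ∈ C, vectors g¹, …, gᵀ ∈ E, and define iterates s^{t+1} = P_C(s^t − η·g^t) for t = 1, …, T. Set δ^t = g^t − ∇Φ(s^t), Ĝ^t = (s^t − s^{t+1})/η, and G^t = (s^t − P_C(s^t − η·∇Φ(s^t)))/η. Then Σ_{t=1}^{T} (η − Lη²/2)·‖Ĝ^t‖² ≤ Φ(s¹) − Φ(s^{T+1}) + η·Σ_{t=1}^{T} (⟪δ^t, G^t⟫ + ‖δ^t‖²). -/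
/-!
Write `v = s^t - s^{t+1}`. The descent lemma gives
`Φ(s^{t+1}) ≤ Φ(s^t) - ⟪∇Φ(s^t), v⟫ + (L/2)‖v‖²`, and `∇Φ(s^t) = g^t - δ^t`. Since `s^t ∈ C`,
the variational inequality of `P_C` at `s^t - η g^t` gives `‖v‖² ≤ η⟪g^t, v⟫`; nonexpansiveness
of `P_C` compares the perturbed step with the exact one, `⟪δ^t, v⟫ ≤ η⟪δ^t, G^t⟫ + η‖δ^t‖²`.
Summing over `t`, the `Φ`-terms telescope.
-/

open RealInnerProductSpace

section

variable {E : Type*} [NormedAddCommGroup E] [InnerProductSpace ℝ E]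

theorem real_inner_sub_sub_nonpos_of_forall_norm_sub_le {C : Set E} (hC : Convex ℝ C)
    {x p c : E} (hp : p ∈ C) (hmin : ∀ c ∈ C, ‖x - p‖ ≤ ‖x - c‖) (hc : c ∈ C) :
    ⟪x - p, c - p⟫ ≤ 0 := by
  have : Nonempty C := ⟨⟨p, hp⟩⟩
  refine (norm_eq_iInf_iff_real_inner_le_zero hC hp).mp (le_antisymm ?_ ?_) c hc
  · exact le_ciInf fun w => hmin w w.2
  · exact ciInf_le ⟨0, by rintro _ ⟨w, rfl⟩; positivity⟩ (⟨p, hp⟩ : C)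

theorem norm_sub_le_of_real_inner_sub_sub_nonpos {x y p q : E}
    (hp : ⟪x - p, q - p⟫ ≤ 0) (hq : ⟪y - q, p - q⟫ ≤ 0) : ‖p - q‖ ≤ ‖x - y‖ := by
  have hsplit : ⟪x - y, p - q⟫ = ‖p - q‖ ^ 2 - ⟪x - p, q - p⟫ - ⟪y - q, p - q⟫ := by
    rw [← real_inner_self_eq_norm_sq]
    simp only [inner_sub_left, inner_sub_right, real_inner_comm]
    ring
  have hcs := real_inner_le_norm (x - y) (p - q)
  nlinarith [norm_nonneg (p - q), norm_nonneg (x - y)]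

theorem le_add_inner_gradient_add_half_mul_norm_sq [CompleteSpace E] {Φ : E → ℝ} {L : ℝ}
    (hΦ : Differentiable ℝ Φ) (hLip : ∀ x y, ‖gradient Φ x - gradient Φ y‖ ≤ L * ‖x - y‖)
    (x y : E) : Φ y ≤ Φ x + ⟪gradient Φ x, y - x⟫ + L / 2 * ‖y - x‖ ^ 2 := by
  set v := y - x
  set φ : ℝ → ℝ := fun u => Φ (x + u • v) - u * ⟪gradient Φ x, v⟫ - L / 2 * ‖v‖ ^ 2 * u ^ 2
  have hφ : ∀ u, HasDerivAt φ
      (⟪gradient Φ (x + u • v) - gradient Φ x, v⟫ - L * ‖v‖ ^ 2 * u) u := by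
    intro u
    have hline : HasDerivAt (fun u : ℝ => x + u • v) v u := by
      simpa using ((hasDerivAt_id u).smul_const v).const_add x
    have hΦline :=
      (hasGradientAt_iff_hasFDerivAt.mp (hΦ (x + u • v)).hasGradientAt).comp_hasDerivAt u hline
    refine ((hΦline.sub ((hasDerivAt_id u).mul_const ⟪gradient Φ x, v⟫)).sub
      ((hasDerivAt_pow 2 u).const_mul (L / 2 * ‖v‖ ^ 2))).congr_deriv ?_
    simp only [InnerProductSpace.toDual_apply_apply, inner_sub_left]
    ring
  -- The Lipschitz bound makes `φ' ≤ 0` on `[0, 1]`, so `φ 1 ≤ φ 0`.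
  have hanti : AntitoneOn φ (Set.Icc 0 1) := by
    refine antitoneOn_of_hasDerivWithinAt_nonpos (convex_Icc 0 1)
      (fun u _ => (hφ u).continuousAt.continuousWithinAt) (fun u _ => (hφ u).hasDerivWithinAt) ?_
    rw [interior_Icc]
    rintro u ⟨hu0, -⟩
    have hgrad : ‖gradient Φ (x + u • v) - gradient Φ x‖ ≤ L * (u * ‖v‖) := by
      simpa [norm_smul, abs_of_pos hu0] using hLip (x + u • v) x
    nlinarith [real_inner_le_norm (gradient Φ (x + u • v) - gradient Φ x) v, norm_nonneg v]
  have hφ10 := hanti (by norm_num : (0 : ℝ) ∈ Set.Icc 0 1) (by norm_num : (1 : ℝ) ∈ Set.Icc 0 1)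
    zero_le_one
  simp only [φ, one_smul, zero_smul, add_zero, add_sub_cancel, v] at hφ10
  linarith

theorem projected_gradient_step_descent [CompleteSpace E] {C : Set E} (hC : Convex ℝ C)
    {proj : E → E} (hprojC : ∀ x, proj x ∈ C) (hproj : ∀ x, ∀ c ∈ C, ‖x - proj x‖ ≤ ‖x - c‖)
    {Φ : E → ℝ} {L : ℝ} (hΦ : Differentiable ℝ Φ)
    (hLip : ∀ x y, ‖gradient Φ x - gradient Φ y‖ ≤ L * ‖x - y‖)
    {η : ℝ} (hη : 0 < η) {x : E} (hx : x ∈ C) (g : E) :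
    (η - L * η ^ 2 / 2) * ‖η⁻¹ • (x - proj (x - η • g))‖ ^ 2
      ≤ Φ x - Φ (proj (x - η • g))
        + η * (⟪g - gradient Φ x, η⁻¹ • (x - proj (x - η • gradient Φ x))⟫
          + ‖g - gradient Φ x‖ ^ 2) := by
  set p := proj (x - η • g)
  set q := proj (x - η • gradient Φ x)
  set δ := g - gradient Φ x
  have hvar : ∀ y, ∀ c ∈ C, ⟪y - proj y, c - proj y⟫ ≤ 0 := fun y _ hc =>
    real_inner_sub_sub_nonpos_of_forall_norm_sub_le hC (hprojC y) (hproj y) hc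
  have hstep : η⁻¹ * ‖x - p‖ ^ 2 ≤ ⟪g, x - p⟫ := by
    have hvi := hvar (x - η • g) x hx
    rw [show x - η • g - p = (x - p) - η • g by abel, inner_sub_left, real_inner_smul_left,
      real_inner_self_eq_norm_sq] at hvi
    rw [inv_mul_le_iff₀ hη]
    linarith
  have hqp : ‖q - p‖ ≤ η * ‖δ‖ := by
    have hne := norm_sub_le_of_real_inner_sub_sub_nonpos (hvar _ p (hprojC _)) (hvar _ q (hprojC _))
    rwa [show x - η • gradient Φ x - (x - η • g) = η • δ by simp only [δ, smul_sub]; abel,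
      norm_smul, Real.norm_of_nonneg hη.le] at hne
  have hδ : ⟪δ, x - p⟫ ≤ ⟪δ, x - q⟫ + η * ‖δ‖ ^ 2 := by
    have hsplit : ⟪δ, x - p⟫ - ⟪δ, x - q⟫ = ⟪δ, q - p⟫ := by
      rw [← inner_sub_right, sub_sub_sub_cancel_left]
    nlinarith [real_inner_le_norm δ (q - p), norm_nonneg δ]
  have hdesc := le_add_inner_gradient_add_half_mul_norm_sq hΦ hLip x p
  rw [← neg_sub x p, inner_neg_right, norm_neg,
    show gradient Φ x = g - δ by simp only [δ, sub_sub_cancel], inner_sub_left] at hdesc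
  rw [norm_smul, Real.norm_of_nonneg (inv_nonneg.mpr hη.le), real_inner_smul_right]
  have hscale : (η - L * η ^ 2 / 2) * (η⁻¹ * ‖x - p‖) ^ 2 = (η⁻¹ - L / 2) * ‖x - p‖ ^ 2 := by
    field_simp
  have hinner : η * (η⁻¹ * ⟪δ, x - q⟫ + ‖δ‖ ^ 2) = ⟪δ, x - q⟫ + η * ‖δ‖ ^ 2 := by
    field_simp
  rw [hscale, hinner]
  linarith

end

theorem sum_descent_inequality_projected_sgd_general
    {E : Type*} [NormedAddCommGroup E] [InnerProductSpace ℝ E] [FiniteDimensional ℝ E]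
    (C : Set E) (hCco : Convex ℝ C)
    (proj : E → E)
    (hprojC : ∀ x, proj x ∈ C) (hproj : ∀ x, ∀ c ∈ C, ‖x - proj x‖ ≤ ‖x - c‖)
    (Φ : E → ℝ) (L : ℝ) (hΦ : Differentiable ℝ Φ)
    (hLip : ∀ x y, ‖gradient Φ x - gradient Φ y‖ ≤ L * ‖x - y‖)
    (η : ℝ) (hη : 0 < η) (T : ℕ)
    (s : ℕ → E) (g : ℕ → E)
    (hs1 : s 1 ∈ C)
    (hupdate : ∀ t ∈ Finset.Icc 1 T, s (t + 1) = proj (s t - η • g t)) :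
    ∑ t ∈ Finset.Icc 1 T, (η - L * η ^ 2 / 2) * ‖η⁻¹ • (s t - s (t + 1))‖ ^ 2
      ≤ Φ (s 1) - Φ (s (T + 1))
        + η * ∑ t ∈ Finset.Icc 1 T,
            (⟪g t - gradient Φ (s t), η⁻¹ • (s t - proj (s t - η • gradient Φ (s t)))⟫
              + ‖g t - gradient Φ (s t)‖ ^ 2) := by
  have hmem : ∀ t ∈ Finset.Icc 1 T, s t ∈ C := by
    rintro (_ | _ | t) ht
    · simp at ht
    · exact hs1
    · rw [hupdate (t + 1) (by simp only [Finset.mem_Icc] at ht ⊢; omega)]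
      exact hprojC _
  have htelescope : ∑ t ∈ Finset.Icc 1 T, (Φ (s t) - Φ (s (t + 1))) = Φ (s 1) - Φ (s (T + 1)) := by
    rw [← Finset.Ico_add_one_right_eq_Icc, ← neg_sub,
      ← Finset.sum_Ico_sub (f := fun t => Φ (s t)) (by omega), ← Finset.sum_neg_distrib]
    simp only [neg_sub]
  calc _ ≤ ∑ t ∈ Finset.Icc 1 T, (Φ (s t) - Φ (s (t + 1)) + η *
          (⟪g t - gradient Φ (s t), η⁻¹ • (s t - proj (s t - η • gradient Φ (s t)))⟫
            + ‖g t - gradient Φ (s t)‖ ^ 2)) := Finset.sum_le_sum fun t ht => by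
        rw [hupdate t ht]
        exact projected_gradient_step_descent hCco hprojC hproj hΦ hLip hη (hmem t ht) (g t)
    _ = _ := by rw [Finset.sum_add_distrib, htelescope, Finset.mul_sum]

/-- Telescoping bound for projected (stochastic) gradient descent: with iterates
`s^{t+1} = P_C(s^t − η g^t)`, `δ^t = g^t − ∇Φ(s^t)`, `Ĝ^t = (s^t − s^{t+1})/η`,
`G^t = (s^t − P_C(s^t − η ∇Φ(s^t)))/η`, one has
`Σ_{t=1}^{T} (η − Lη²/2)‖Ĝ^t‖² ≤ Φ(s¹) − Φ(s^{T+1}) + η Σ_{t=1}^{T} (⟪δ^t, G^t⟫ + ‖δ^t‖²)`. -/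
theorem sum_descent_inequality_projected_sgd
    {E : Type*} [NormedAddCommGroup E] [InnerProductSpace ℝ E] [FiniteDimensional ℝ E]
    (C : Set E) (hCne : C.Nonempty) (hCcl : IsClosed C) (hCco : Convex ℝ C)
    (proj : E → E)
    (hprojC : ∀ x, proj x ∈ C) (hproj : ∀ x, ∀ c ∈ C, ‖x - proj x‖ ≤ ‖x - c‖)
    (Φ : E → ℝ) (L : ℝ) (hΦ : Differentiable ℝ Φ)
    (hLip : ∀ x y, ‖gradient Φ x - gradient Φ y‖ ≤ L * ‖x - y‖)
    (η : ℝ) (hη : 0 < η) (T : ℕ)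
    (s : ℕ → E) (g : ℕ → E)
    (hs1 : s 1 ∈ C)
    (hupdate : ∀ t ∈ Finset.Icc 1 T, s (t + 1) = proj (s t - η • g t)) :
    ∑ t ∈ Finset.Icc 1 T, (η - L * η ^ 2 / 2) * ‖η⁻¹ • (s t - s (t + 1))‖ ^ 2
      ≤ Φ (s 1) - Φ (s (T + 1))
        + η * ∑ t ∈ Finset.Icc 1 T,
            (⟪g t - gradient Φ (s t), η⁻¹ • (s t - proj (s t - η • gradient Φ (s t)))⟫
              + ‖g t - gradient Φ (s t)‖ ^ 2) :=
  sum_descent_inequality_projected_sgd_general C hCco proj hprojC hproj Φ L hΦ hLip η hη T s g hs1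
    hupdate
end

section
/- Let (Ω, ℱ, P) be a probability space with filtration (ℱ_t), let C be a nonempty closed convex subset of a finite-dimensional real inner product space E, and let Φ : E → ℝ be differentiable with L-Lipschitz gradient and bounded below by Φ*. Let 0 < η < 1/L, and let random iterates s^t (ℱ_t-measurable, valued in C) and stochastic gradients g^t (ℱ_{t+1}-measurable, square-integrable) satisfy for every t ≥ 1: s^{t+1} = P_C(s^t − η·g^t), E[g^t | ℱ_t] = ∇Φ(s^t) almost surely, and E‖g^t − ∇Φ(s^t)‖² ≤ σ², with s¹ deterministic. Define G^t = (s^t − P_C(s^t − η·∇Φ(s^t)))/η. Then limsup_{T→∞} (1/T)·Σ_{t=1}^{T} E‖G^t‖² ≤ ((8 − 2Lη)/(2 − Lη))·σ². -/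
/-!
With `a = 1 - Lη/2`, the descent lemma and the variational inequality of the projection make
every step a descent step up to noise: writing `Gᵍ` for the gradient mapping built from the
stochastic gradient `g^t` and `δ = g^t - ∇Φ(s^t)`,
`Φ(s^{t+1}) ≤ Φ(s^t) - η a ‖Gᵍ‖² + η ⟪δ, Gᵍ⟫`.
The projection is nonexpansive, so the gradient mapping is 1-Lipschitz in the direction; hence
`⟪δ, Gᵍ⟫ ≤ ‖δ‖² + ⟪δ, G^t⟫`, and `⟪δ, G^t⟫` has mean zero because `G^t` is `ℱ_t`-measurable while
`E[δ | ℱ_t] = 0`. Telescoping gives `η a Σ E‖Gᵍ‖² ≤ Φ(s¹) - Φ* + η T σ²`, and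
`‖G^t‖² ≤ 2‖Gᵍ‖² + 2‖δ‖²` transfers this to `G^t`. After dividing by `T` only
`(2/a + 2) σ² = (8 - 2Lη)/(2 - Lη) σ²` survives.
-/

open MeasureTheory RealInnerProductSpace

open Finset Filter

section MetricProjection

variable {E : Type*} [NormedAddCommGroup E]

structure IsMetricProjection (C : Set E) (proj : E → E) : Prop where
  mem : ∀ x, proj x ∈ C
  norm_sub_le : ∀ x, ∀ c ∈ C, ‖x - proj x‖ ≤ ‖x - c‖

namespace IsMetricProjection

variable {C : Set E} {proj : E → E}

theorem apply_eq_self (hp : IsMetricProjection C proj) {x : E} (hx : x ∈ C) : proj x = x := by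
  simpa [eq_comm, sub_eq_zero] using hp.norm_sub_le x x hx

variable [InnerProductSpace ℝ E]

theorem inner_sub_sub_nonpos (hp : IsMetricProjection C proj) (hC : Convex ℝ C) (x : E)
    {c : E} (hc : c ∈ C) : ⟪x - proj x, c - proj x⟫ ≤ 0 := by
  refine (norm_eq_iInf_iff_real_inner_le_zero hC (hp.mem x)).1 ?_ c hc
  have : Nonempty C := ⟨⟨proj x, hp.mem x⟩⟩
  exact le_antisymm (le_ciInf fun w => hp.norm_sub_le x w w.2)
    (ciInf_le (f := fun w : C => ‖x - w‖) ⟨0, by rintro _ ⟨w, rfl⟩; positivity⟩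
      ⟨proj x, hp.mem x⟩)

theorem norm_sub_le_norm_sub (hp : IsMetricProjection C proj) (hC : Convex ℝ C) (x y : E) :
    ‖proj x - proj y‖ ≤ ‖x - y‖ := by
  have hx := hp.inner_sub_sub_nonpos hC x (hp.mem y)
  have hy := hp.inner_sub_sub_nonpos hC y (hp.mem x)
  have hsum : ⟪x - proj x, proj y - proj x⟫ + ⟪y - proj y, proj x - proj y⟫
      = ‖proj x - proj y‖ ^ 2 - ⟪x - y, proj x - proj y⟫ := by
    rw [← real_inner_self_eq_norm_sq]
    simp only [inner_sub_left, inner_sub_right, real_inner_comm]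
    ring
  have hcs := real_inner_le_norm (x - y) (proj x - proj y)
  nlinarith [norm_nonneg (proj x - proj y), norm_nonneg (x - y)]

theorem continuous (hp : IsMetricProjection C proj) (hC : Convex ℝ C) : Continuous proj :=
  (LipschitzWith.of_dist_le_mul (K := 1) fun x y => by
    simpa [dist_eq_norm] using hp.norm_sub_le_norm_sub hC x y).continuous

end IsMetricProjection

end MetricProjection

section GradientMapping

variable {E : Type*} [NormedAddCommGroup E] [InnerProductSpace ℝ E]

/-- `gradientMapping proj η x (∇Φ x)` is the paper's `G^t` at `x = s^t`; with the stochastic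
gradient as direction it is the actual step:
`s^{t+1} = s^t - η • gradientMapping proj η s^t g^t`. -/
noncomputable def gradientMapping (proj : E → E) (η : ℝ) (x v : E) : E :=
  η⁻¹ • (x - proj (x - η • v))

variable {C : Set E} {proj : E → E} {η : ℝ}

theorem sub_smul_gradientMapping (hη : η ≠ 0) (x v : E) :
    x - η • gradientMapping proj η x v = proj (x - η • v) := by
  simp [gradientMapping, smul_smul, hη]

theorem norm_gradientMapping_sub_le (hp : IsMetricProjection C proj) (hC : Convex ℝ C)
    (hη : 0 < η) (x v w : E) :
    ‖gradientMapping proj η x v - gradientMapping proj η x w‖ ≤ ‖v - w‖ := by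
  have h := hp.norm_sub_le_norm_sub hC (x - η • w) (x - η • v)
  rw [show x - η • w - (x - η • v) = η • (v - w) by rw [smul_sub]; abel, norm_smul,
    Real.norm_of_nonneg hη.le] at h
  rw [gradientMapping, gradientMapping, ← smul_sub, norm_smul,
    Real.norm_of_nonneg (inv_nonneg.2 hη.le), inv_mul_le_iff₀ hη,
    show x - proj (x - η • v) - (x - proj (x - η • w)) = proj (x - η • w) - proj (x - η • v) by
      abel]
  exact h

theorem gradientMapping_zero (hp : IsMetricProjection C proj) {x : E} (hx : x ∈ C) :
    gradientMapping proj η x 0 = 0 := by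
  simp [gradientMapping, hp.apply_eq_self hx]

theorem norm_gradientMapping_le (hp : IsMetricProjection C proj) (hC : Convex ℝ C)
    (hη : 0 < η) {x : E} (hx : x ∈ C) (v : E) : ‖gradientMapping proj η x v‖ ≤ ‖v‖ := by
  simpa [gradientMapping_zero hp hx] using norm_gradientMapping_sub_le hp hC hη x v 0

theorem norm_sq_gradientMapping_le_inner (hp : IsMetricProjection C proj) (hC : Convex ℝ C)
    (hη : 0 < η) {x : E} (hx : x ∈ C) (v : E) :
    ‖gradientMapping proj η x v‖ ^ 2 ≤ ⟪v, gradientMapping proj η x v⟫ := by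
  set G := gradientMapping proj η x v
  have h := hp.inner_sub_sub_nonpos hC (x - η • v) hx
  rw [← sub_smul_gradientMapping (proj := proj) hη.ne' x v,
    show x - η • v - (x - η • G) = η • (G - v) by rw [smul_sub]; abel,
    show x - (x - η • G) = η • G by abel, real_inner_smul_left, real_inner_smul_right,
    inner_sub_left, real_inner_self_eq_norm_sq] at h
  nlinarith [mul_pos hη hη]

theorem inner_sub_gradientMapping_le (hp : IsMetricProjection C proj) (hC : Convex ℝ C)
    (hη : 0 < η) (x v w : E) :
    ⟪v - w, gradientMapping proj η x v⟫
      ≤ ‖v - w‖ ^ 2 + ⟪v - w, gradientMapping proj η x w⟫ := by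
  have h := (real_inner_le_norm _ _).trans (mul_le_mul_of_nonneg_left
    (norm_gradientMapping_sub_le hp hC hη x v w) (norm_nonneg (v - w)))
  rw [inner_sub_right] at h
  nlinarith

theorem norm_sq_gradientMapping_le (hp : IsMetricProjection C proj) (hC : Convex ℝ C)
    (hη : 0 < η) (x v w : E) :
    ‖gradientMapping proj η x w‖ ^ 2
      ≤ 2 * ‖gradientMapping proj η x v‖ ^ 2 + 2 * ‖v - w‖ ^ 2 := by
  have h := norm_le_norm_add_norm_sub' (gradientMapping proj η x w) (gradientMapping proj η x v)
  rw [norm_sub_rev] at h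
  nlinarith [norm_gradientMapping_sub_le hp hC hη x v w, norm_nonneg (gradientMapping proj η x w),
    sq_nonneg (‖gradientMapping proj η x v‖ - ‖v - w‖)]

end GradientMapping

section Descent

variable {E : Type*} [NormedAddCommGroup E] [InnerProductSpace ℝ E] [CompleteSpace E]

theorem descent_lemma {Φ : E → ℝ} {L : ℝ} (hΦ : Differentiable ℝ Φ)
    (hLip : ∀ x y, ‖gradient Φ x - gradient Φ y‖ ≤ L * ‖x - y‖) (x y : E) :
    Φ y ≤ Φ x + ⟪gradient Φ x, y - x⟫ + L / 2 * ‖y - x‖ ^ 2 := by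
  set d := y - x
  have hΦ' (t : ℝ) : HasDerivAt (fun t : ℝ => Φ (x + t • d)) ⟪gradient Φ (x + t • d), d⟫ t := by
    have := (hΦ (x + t • d)).hasFDerivAt.comp_hasDerivAt t
      (((hasDerivAt_id t).smul_const d).const_add x)
    simpa [Function.comp_def, inner_gradient_left] using this
  have hB' (t : ℝ) : HasDerivAt (fun t : ℝ => Φ x + t * ⟪gradient Φ x, d⟫ + L / 2 * t ^ 2 * ‖d‖ ^ 2)
      (⟪gradient Φ x, d⟫ + L * t * ‖d‖ ^ 2) t := by
    refine ((((hasDerivAt_id' t).mul_const _).const_add (Φ x)).add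
      (((hasDerivAt_pow 2 t).const_mul (L / 2)).mul_const (‖d‖ ^ 2))).congr_deriv ?_
    push_cast
    ring
  have hle (t : ℝ) (ht : 0 ≤ t) :
      ⟪gradient Φ (x + t • d), d⟫ ≤ ⟪gradient Φ x, d⟫ + L * t * ‖d‖ ^ 2 := by
    have h := (real_inner_le_norm _ d).trans (mul_le_mul_of_nonneg_right
      (hLip (x + t • d) x) (norm_nonneg d))
    rw [inner_sub_left, add_sub_cancel_left, norm_smul, Real.norm_of_nonneg ht] at h
    nlinarith
  have key := image_le_of_deriv_right_le_deriv_boundary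
    (fun t _ => (hΦ' t).continuousAt.continuousWithinAt) (fun t _ => (hΦ' t).hasDerivWithinAt)
    (by simp) (fun t _ => (hB' t).continuousAt.continuousWithinAt)
    (fun t _ => (hB' t).hasDerivWithinAt) (fun t ht => hle t ht.1) (Set.right_mem_Icc.2 zero_le_one)
  simpa [d] using key

variable {C : Set E} {proj : E → E} {Φ : E → ℝ} {L η : ℝ}

theorem apply_proj_sub_smul_le (hp : IsMetricProjection C proj) (hC : Convex ℝ C)
    (hΦ : Differentiable ℝ Φ) (hLip : ∀ x y, ‖gradient Φ x - gradient Φ y‖ ≤ L * ‖x - y‖)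
    (hη : 0 < η) {x : E} (hx : x ∈ C) (v : E) :
    Φ (proj (x - η • v)) ≤ Φ x - η * (1 - L * η / 2) * ‖gradientMapping proj η x v‖ ^ 2
      + η * ⟪v - gradient Φ x, gradientMapping proj η x v⟫ := by
  set G := gradientMapping proj η x v
  have hdesc := descent_lemma hΦ hLip x (x - η • G)
  rw [sub_sub_cancel_left, inner_neg_right, norm_neg, real_inner_smul_right, norm_smul,
    Real.norm_of_nonneg hη.le, sub_smul_gradientMapping hη.ne'] at hdesc
  have hG := norm_sq_gradientMapping_le_inner hp hC hη hx v
  rw [inner_sub_left]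
  nlinarith

theorem sum_Icc_one_sub' (f : ℕ → ℝ) (T : ℕ) :
    ∑ t ∈ Icc 1 T, (f t - f (t + 1)) = f 1 - f (T + 1) := by
  rw [← Finset.Ico_add_one_right_eq_Icc, ← neg_sub, ← sum_Ico_sub f (by omega : 1 ≤ T + 1),
    ← sum_neg_distrib]
  simp only [neg_sub]

theorem sum_descent_le (hp : IsMetricProjection C proj) (hC : Convex ℝ C)
    (hΦ : Differentiable ℝ Φ) (hLip : ∀ x y, ‖gradient Φ x - gradient Φ y‖ ≤ L * ‖x - y‖)
    (hη : 0 < η) {x v : ℕ → E} (hxC : ∀ t, x t ∈ C)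
    (hx : ∀ t, 1 ≤ t → x (t + 1) = proj (x t - η • v t)) (T : ℕ) :
    ∑ t ∈ Icc 1 T, (η * (1 - L * η / 2) * ‖gradientMapping proj η (x t) (v t)‖ ^ 2
      - η * ⟪v t - gradient Φ (x t), gradientMapping proj η (x t) (v t)⟫)
      ≤ Φ (x 1) - Φ (x (T + 1)) := by
  refine (sum_le_sum fun t ht => ?_).trans_eq (sum_Icc_one_sub' (fun t => Φ (x t)) T)
  have := apply_proj_sub_smul_le hp hC hΦ hLip hη (hxC t) (v t)
  rw [← hx t (mem_Icc.1 ht).1] at this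
  linarith

end Descent

section Expectation

variable {E : Type*} [NormedAddCommGroup E] [InnerProductSpace ℝ E]
variable {Ω : Type*} {m mΩ : MeasurableSpace Ω} {μ : Measure Ω}

theorem MeasureTheory.MemLp.integrable_inner {u v : Ω → E} (hu : MemLp u 2 μ) (hv : MemLp v 2 μ) :
    Integrable (fun ω => ⟪u ω, v ω⟫) μ :=
  (L2.integrable_inner (𝕜 := ℝ) (hu.toLp u) (hv.toLp v)).congr <| by
    filter_upwards [hu.coeFn_toLp, hv.coeFn_toLp] with ω hu hv
    rw [hu, hv]

variable {C : Set E} {proj : E → E} {η : ℝ}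

theorem memLp_gradientMapping (hp : IsMetricProjection C proj) (hC : Convex ℝ C) (hη : 0 < η)
    {p : ENNReal} {x v : Ω → E} (hx : AEStronglyMeasurable x μ) (hxC : ∀ ω, x ω ∈ C)
    (hv : MemLp v p μ) : MemLp (fun ω => gradientMapping proj η (x ω) (v ω)) p μ :=
  hv.of_le (((hx.sub ((hp.continuous hC).comp_aestronglyMeasurable (hx.sub (hv.1.const_smul η)))
    ).const_smul η⁻¹)) (ae_of_all _ fun ω => by
      simpa using norm_gradientMapping_le hp hC hη (hxC ω) (v ω))

theorem integral_norm_sq_gradientMapping_le (hp : IsMetricProjection C proj) (hC : Convex ℝ C)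
    (hη : 0 < η) {x v w : Ω → E} (hx : AEStronglyMeasurable x μ) (hxC : ∀ ω, x ω ∈ C)
    (hv : MemLp v 2 μ) (hw : MemLp w 2 μ) :
    ∫ ω, ‖gradientMapping proj η (x ω) (w ω)‖ ^ 2 ∂μ
      ≤ 2 * ∫ ω, ‖gradientMapping proj η (x ω) (v ω)‖ ^ 2 ∂μ + 2 * ∫ ω, ‖v ω - w ω‖ ^ 2 ∂μ := by
  have hGv := (memLp_gradientMapping hp hC hη hx hxC hv).integrable_norm_pow two_ne_zero
  have hvw : Integrable (fun ω => ‖v ω - w ω‖ ^ 2) μ := (hv.sub hw).integrable_norm_pow two_ne_zero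
  rw [← integral_const_mul, ← integral_const_mul,
    ← integral_add (hGv.const_mul 2) (hvw.const_mul 2)]
  exact integral_mono ((memLp_gradientMapping hp hC hη hx hxC hw).integrable_norm_pow two_ne_zero)
    ((hGv.const_mul 2).add (hvw.const_mul 2))
    fun ω => norm_sq_gradientMapping_le hp hC hη _ _ _

variable [CompleteSpace E] {Φ : E → ℝ} {L : ℝ}

theorem integral_inner_eq_of_condExp_ae_eq (hm : m ≤ mΩ)
    [SigmaFinite (μ.trim hm)] {u v w : Ω → E} (hu : StronglyMeasurable[m] u)
    (huv : Integrable (fun ω => ⟪u ω, v ω⟫) μ) (hv : Integrable v μ) (hvw : μ[v|m] =ᵐ[μ] w) :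
    ∫ ω, ⟪u ω, v ω⟫ ∂μ = ∫ ω, ⟪u ω, w ω⟫ ∂μ := by
  rw [← integral_condExp hm]
  refine integral_congr_ae ?_
  filter_upwards [condExp_bilin_of_stronglyMeasurable_left (innerSL ℝ) hu huv hv, hvw]
    with ω h1 h2
  rw [← h2]
  exact h1

theorem integral_inner_sub_gradientMapping_le [IsFiniteMeasure μ] (hm : m ≤ mΩ)
    (hp : IsMetricProjection C proj) (hC : Convex ℝ C)
    (hLip : ∀ x y, ‖gradient Φ x - gradient Φ y‖ ≤ L * ‖x - y‖) (hη : 0 < η)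
    {x v : Ω → E} (hx : StronglyMeasurable[m] x) (hxC : ∀ ω, x ω ∈ C) (hv : MemLp v 2 μ)
    (hcond : μ[v|m] =ᵐ[μ] fun ω => gradient Φ (x ω)) :
    ∫ ω, ⟪v ω - gradient Φ (x ω), gradientMapping proj η (x ω) (v ω)⟫ ∂μ
      ≤ ∫ ω, ‖v ω - gradient Φ (x ω)‖ ^ 2 ∂μ := by
  have hgrad : Continuous (gradient Φ) :=
    (LipschitzWith.of_dist_le' fun x y => by simpa [dist_eq_norm] using hLip x y).continuous
  have hg : MemLp (fun ω => gradient Φ (x ω)) 2 μ := (hv.condExp one_le_two).ae_eq hcond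
  have hG := memLp_gradientMapping hp hC hη (hx.mono hm).aestronglyMeasurable hxC hg
  have hGm : StronglyMeasurable[m] fun ω => gradientMapping proj η (x ω) (gradient Φ (x ω)) :=
    (show Continuous fun y => gradientMapping proj η y (gradient Φ y) by
      unfold gradientMapping; have := hp.continuous hC; fun_prop).comp_stronglyMeasurable hx
  have horth : ∫ ω, ⟪v ω - gradient Φ (x ω),
      gradientMapping proj η (x ω) (gradient Φ (x ω))⟫ ∂μ = 0 := by
    have h := integral_inner_eq_of_condExp_ae_eq hm hGm (hG.integrable_inner hv)
      (hv.integrable one_le_two) hcond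
    rw [← sub_eq_zero, ← integral_sub (hG.integrable_inner hv) (hG.integrable_inner hg)] at h
    rw [← h]
    refine integral_congr_ae (ae_of_all _ fun ω => ?_)
    dsimp only
    rw [inner_sub_left, real_inner_comm (v ω), real_inner_comm (gradient Φ (x ω))]
  have hδ : MemLp (fun ω => v ω - gradient Φ (x ω)) 2 μ := hv.sub hg
  calc _ ≤ ∫ ω, (‖v ω - gradient Φ (x ω)‖ ^ 2 + ⟪v ω - gradient Φ (x ω),
        gradientMapping proj η (x ω) (gradient Φ (x ω))⟫) ∂μ :=
        integral_mono (hδ.integrable_inner (memLp_gradientMapping hp hC hη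
          (hx.mono hm).aestronglyMeasurable hxC hv))
          ((hδ.integrable_norm_pow two_ne_zero).add (hδ.integrable_inner hG))
          fun ω => inner_sub_gradientMapping_le hp hC hη _ _ _
    _ = _ := by
        rw [integral_add (hδ.integrable_norm_pow two_ne_zero) (hδ.integrable_inner hG), horth,
          add_zero]

theorem sum_integral_descent_le [IsProbabilityMeasure μ] (hp : IsMetricProjection C proj)
    (hC : Convex ℝ C) (hΦ : Differentiable ℝ Φ)
    (hLip : ∀ x y, ‖gradient Φ x - gradient Φ y‖ ≤ L * ‖x - y‖) {Φstar : ℝ}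
    (hbdd : ∀ x, Φstar ≤ Φ x) (hη : 0 < η) {s g : ℕ → Ω → E}
    (hs : ∀ t, AEStronglyMeasurable (s t) μ) (hsC : ∀ t ω, s t ω ∈ C)
    (hgL2 : ∀ t, MemLp (g t) 2 μ)
    (hgrad : ∀ t, 1 ≤ t → MemLp (fun ω => gradient Φ (s t ω)) 2 μ)
    (hupdate : ∀ t, 1 ≤ t → ∀ ω, s (t + 1) ω = proj (s t ω - η • g t ω))
    {s₁ : E} (hs1 : ∀ ω, s 1 ω = s₁) (T : ℕ) :
    η * (1 - L * η / 2) * ∑ t ∈ Icc 1 T,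
        ∫ ω, ‖gradientMapping proj η (s t ω) (g t ω)‖ ^ 2 ∂μ
      - η * ∑ t ∈ Icc 1 T,
        ∫ ω, ⟪g t ω - gradient Φ (s t ω), gradientMapping proj η (s t ω) (g t ω)⟫ ∂μ
      ≤ Φ s₁ - Φstar := by
  have hG (t : ℕ) := memLp_gradientMapping hp hC hη (hs t) (hsC t) (hgL2 t)
  have hGsq (t : ℕ) :=
    ((hG t).integrable_norm_pow two_ne_zero).const_mul (η * (1 - L * η / 2))
  have hδ (t : ℕ) (ht : 1 ≤ t) : MemLp (fun ω => g t ω - gradient Φ (s t ω)) 2 μ :=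
    (hgL2 t).sub (hgrad t ht)
  have hδG (t : ℕ) (ht : t ∈ Icc 1 T) :=
    ((hδ t (mem_Icc.1 ht).1).integrable_inner (hG t)).const_mul η
  have hint (t : ℕ) (ht : t ∈ Icc 1 T) : Integrable (fun ω =>
      η * (1 - L * η / 2) * ‖gradientMapping proj η (s t ω) (g t ω)‖ ^ 2
        - η * ⟪g t ω - gradient Φ (s t ω), gradientMapping proj η (s t ω) (g t ω)⟫) μ :=
    (hGsq t).sub (hδG t ht)
  have h := integral_mono (integrable_finsetSum _ hint) (integrable_const (Φ s₁ - Φstar))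
    fun ω => (sum_descent_le hp hC hΦ hLip hη (x := fun t => s t ω) (fun t => hsC t ω)
      (fun t ht => hupdate t ht ω) T).trans (by rw [hs1]; linarith [hbdd (s (T + 1) ω)])
  rw [integral_finsetSum _ hint, integral_const, probReal_univ, one_smul,
    sum_congr rfl fun t ht => integral_sub (hGsq t) (hδG t ht)] at h
  simpa only [integral_const_mul, sum_sub_distrib, ← mul_sum] using h

theorem sum_integral_norm_sq_gradientMapping_le [IsProbabilityMeasure μ] (ℱ : Filtration ℕ mΩ)
    (hp : IsMetricProjection C proj) (hC : Convex ℝ C) (hΦ : Differentiable ℝ Φ)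
    (hLip : ∀ x y, ‖gradient Φ x - gradient Φ y‖ ≤ L * ‖x - y‖) {Φstar : ℝ}
    (hbdd : ∀ x, Φstar ≤ Φ x) (hη : 0 < η) (hLη : L * η < 2) {σ : ℝ} {s g : ℕ → Ω → E}
    (hsmeas : ∀ t, StronglyMeasurable[ℱ t] (s t)) (hsC : ∀ t ω, s t ω ∈ C)
    (hgL2 : ∀ t, MemLp (g t) 2 μ)
    (hupdate : ∀ t, 1 ≤ t → ∀ ω, s (t + 1) ω = proj (s t ω - η • g t ω))
    (hcond : ∀ t, 1 ≤ t → μ[g t|ℱ t] =ᵐ[μ] fun ω => gradient Φ (s t ω))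
    (hvar : ∀ t, 1 ≤ t → ∫ ω, ‖g t ω - gradient Φ (s t ω)‖ ^ 2 ∂μ ≤ σ ^ 2)
    {s₁ : E} (hs1 : ∀ ω, s 1 ω = s₁) (T : ℕ) :
    ∑ t ∈ Icc 1 T, ∫ ω, ‖gradientMapping proj η (s t ω) (gradient Φ (s t ω))‖ ^ 2 ∂μ
      ≤ 2 * (Φ s₁ - Φstar) / (η * (1 - L * η / 2))
        + T * ((2 / (1 - L * η / 2) + 2) * σ ^ 2) := by
  have ha : 0 < 1 - L * η / 2 := by linarith
  have hs (t : ℕ) := ((hsmeas t).mono (ℱ.le t)).aestronglyMeasurable (μ := μ)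
  have hgrad (t : ℕ) (ht : 1 ≤ t) : MemLp (fun ω => gradient Φ (s t ω)) 2 μ :=
    ((hgL2 t).condExp one_le_two).ae_eq (hcond t ht)
  have hdescent := sum_integral_descent_le hp hC hΦ hLip hbdd hη hs hsC hgL2 hgrad hupdate hs1 T
  set X := ∑ t ∈ Icc 1 T, ∫ ω, ‖gradientMapping proj η (s t ω) (g t ω)‖ ^ 2 ∂μ
  set Y := ∑ t ∈ Icc 1 T,
    ∫ ω, ⟪g t ω - gradient Φ (s t ω), gradientMapping proj η (s t ω) (g t ω)⟫ ∂μ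
  have hnoise : Y ≤ T * σ ^ 2 := by
    calc Y ≤ ∑ _t ∈ Icc 1 T, σ ^ 2 := sum_le_sum fun t ht =>
          (integral_inner_sub_gradientMapping_le (ℱ.le t) hp hC hLip hη (hsmeas t) (hsC t)
            (hgL2 t) (hcond t (mem_Icc.1 ht).1)).trans (hvar t (mem_Icc.1 ht).1)
      _ = T * σ ^ 2 := by simp
  have hX : X ≤ (Φ s₁ - Φstar + η * (T * σ ^ 2)) / (η * (1 - L * η / 2)) := by
    rw [le_div_iff₀ (by positivity)]
    nlinarith
  calc _ ≤ ∑ t ∈ Icc 1 T,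
        (2 * ∫ ω, ‖gradientMapping proj η (s t ω) (g t ω)‖ ^ 2 ∂μ + 2 * σ ^ 2) :=
        sum_le_sum fun t ht => (integral_norm_sq_gradientMapping_le hp hC hη (hs t) (hsC t)
          (hgL2 t) (hgrad t (mem_Icc.1 ht).1)).trans (by gcongr; exact hvar t (mem_Icc.1 ht).1)
    _ = 2 * X + T * (2 * σ ^ 2) := by simp [sum_add_distrib, ← mul_sum, X]
    _ ≤ 2 * ((Φ s₁ - Φstar + η * (T * σ ^ 2)) / (η * (1 - L * η / 2))) + T * (2 * σ ^ 2) := by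
        linarith
    _ = _ := by field_simp; ring

end Expectation

theorem limsup_one_div_mul_le {S : ℕ → ℝ} {K B : ℝ} (hS : ∀ T, 0 ≤ S T)
    (h : ∀ T, S T ≤ K + T * B) : limsup (fun T : ℕ => (1 / (T : ℝ)) * S T) atTop ≤ B := by
  have hlim : Tendsto (fun T : ℕ => K / T + B) atTop (nhds B) := by
    simpa using (tendsto_const_div_atTop_nhds_zero_nat K).add_const B
  refine (limsup_le_limsup (eventually_atTop.2 ⟨1, fun T hT => ?_⟩)
    (isBoundedUnder_of ⟨0, fun T => by have := hS T; positivity⟩).isCoboundedUnder_le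
    hlim.isBoundedUnder_le).trans_eq hlim.limsup_eq
  have hT : (0 : ℝ) < T := by exact_mod_cast hT
  calc (1 / (T : ℝ)) * S T ≤ (1 / T) * (K + T * B) := by gcongr; exact h T
    _ = K / T + B := by field_simp

theorem psgd_limsup_gradient_mapping_bound_general
    {E : Type*} [NormedAddCommGroup E] [InnerProductSpace ℝ E] [FiniteDimensional ℝ E]
    {Ω : Type*} {mΩ : MeasurableSpace Ω} (P : Measure Ω) [IsProbabilityMeasure P]
    (ℱ : Filtration ℕ mΩ)
    (C : Set E) (hCco : Convex ℝ C)
    (proj : E → E)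
    (hprojC : ∀ x, proj x ∈ C) (hproj : ∀ x, ∀ c ∈ C, ‖x - proj x‖ ≤ ‖x - c‖)
    (Φ : E → ℝ) (L Φstar : ℝ) (hΦ : Differentiable ℝ Φ)
    (hLip : ∀ x y, ‖gradient Φ x - gradient Φ y‖ ≤ L * ‖x - y‖)
    (hbdd : ∀ x, Φstar ≤ Φ x)
    (η : ℝ) (hη0 : 0 < η) (hηL : η < 1 / L)
    (σ : ℝ)
    (s g : ℕ → Ω → E)
    (hsmeas : ∀ t, StronglyMeasurable[ℱ t] (s t))
    (hsC : ∀ t ω, s t ω ∈ C)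
    (hgL2 : ∀ t, MemLp (g t) 2 P)
    (hupdate : ∀ t, 1 ≤ t → ∀ ω, s (t + 1) ω = proj (s t ω - η • g t ω))
    (hcond : ∀ t, 1 ≤ t → P[g t|ℱ t] =ᵐ[P] fun ω => gradient Φ (s t ω))
    (hvar : ∀ t, 1 ≤ t → ∫ ω, ‖g t ω - gradient Φ (s t ω)‖ ^ 2 ∂P ≤ σ ^ 2)
    (s₁ : E) (hs1 : ∀ ω, s 1 ω = s₁) :
    Filter.limsup
        (fun T : ℕ =>
          (1 / (T : ℝ)) *
            ∑ t ∈ Finset.Icc 1 T,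
              ∫ ω, ‖η⁻¹ • (s t ω - proj (s t ω - η • gradient Φ (s t ω)))‖ ^ 2 ∂P)
        Filter.atTop
      ≤ ((8 - 2 * L * η) / (2 - L * η)) * σ ^ 2 := by
  have hL : 0 < L := one_div_pos.1 (hη0.trans hηL)
  have hLη : L * η < 1 := by rw [mul_comm]; exact (lt_div_iff₀ hL).1 (by simpa using hηL)
  refine (limsup_one_div_mul_le
    (fun T => sum_nonneg fun t _ => integral_nonneg fun ω => by positivity)
    (sum_integral_norm_sq_gradientMapping_le ℱ ⟨hprojC, hproj⟩ hCco hΦ hLip hbdd hη0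
      (by linarith) hsmeas hsC hgL2 hupdate hcond hvar hs1)).trans_eq ?_
  have : 2 - L * η ≠ 0 := by linarith
  field_simp
  ring

/-- Asymptotic convergence of projected SGD (Property 1 / Theorem A.1):
`limsup_{T→∞} (1/T) Σ_{t=1}^{T} E‖G^t‖² ≤ ((8 − 2Lη)/(2 − Lη)) σ²`,
where `G^t = (s^t − P_C(s^t − η ∇Φ(s^t)))/η`. -/
theorem psgd_limsup_gradient_mapping_bound
    {E : Type*} [NormedAddCommGroup E] [InnerProductSpace ℝ E] [FiniteDimensional ℝ E]
    {Ω : Type*} {mΩ : MeasurableSpace Ω} (P : Measure Ω) [IsProbabilityMeasure P]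
    (ℱ : Filtration ℕ mΩ)
    (C : Set E) (hCne : C.Nonempty) (hCcl : IsClosed C) (hCco : Convex ℝ C)
    (proj : E → E)
    (hprojC : ∀ x, proj x ∈ C) (hproj : ∀ x, ∀ c ∈ C, ‖x - proj x‖ ≤ ‖x - c‖)
    (Φ : E → ℝ) (L Φstar : ℝ) (hΦ : Differentiable ℝ Φ)
    (hLip : ∀ x y, ‖gradient Φ x - gradient Φ y‖ ≤ L * ‖x - y‖)
    (hbdd : ∀ x, Φstar ≤ Φ x)
    (η : ℝ) (hL : 0 < L) (hη0 : 0 < η) (hηL : η < 1 / L)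
    (σ : ℝ)
    (s g : ℕ → Ω → E)
    (hsmeas : ∀ t, StronglyMeasurable[ℱ t] (s t))
    (hsC : ∀ t ω, s t ω ∈ C)
    (hgmeas : ∀ t, StronglyMeasurable[ℱ (t + 1)] (g t))
    (hgL2 : ∀ t, MemLp (g t) 2 P)
    (hupdate : ∀ t, 1 ≤ t → ∀ ω, s (t + 1) ω = proj (s t ω - η • g t ω))
    (hcond : ∀ t, 1 ≤ t → P[g t|ℱ t] =ᵐ[P] fun ω => gradient Φ (s t ω))
    (hvar : ∀ t, 1 ≤ t → ∫ ω, ‖g t ω - gradient Φ (s t ω)‖ ^ 2 ∂P ≤ σ ^ 2)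
    (s₁ : E) (hs1 : ∀ ω, s 1 ω = s₁) :
    Filter.limsup
        (fun T : ℕ =>
          (1 / (T : ℝ)) *
            ∑ t ∈ Finset.Icc 1 T,
              ∫ ω, ‖η⁻¹ • (s t ω - proj (s t ω - η • gradient Φ (s t ω)))‖ ^ 2 ∂P)
        Filter.atTop
      ≤ ((8 - 2 * L * η) / (2 - L * η)) * σ ^ 2 :=
  psgd_limsup_gradient_mapping_bound_general P ℱ C hCco proj hprojC hproj Φ L Φstar hΦ hLip hbdd η
    hη0 hηL σ s g hsmeas hsC hgL2 hupdate hcond hvar s₁ hs1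
end
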